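/- Let R be a Łukasiewicz near semiring with involution α. Define the ternary terms t₁(x,y,z) = ((x·α(y)) + (y·α(x))) + z and t₂(x,y,z) = α((x·α(y)) + (y·α(x)))·z. Then for all x, y, z ∈ R: t₁(x,y,z) = z and t₂(x,y,z) = z if and only if x = y. (Consequently, by Csákány's criterion, the variety of Łukasiewicz near semirings is congruence regular.) -/

import Mathlib

/-!
With `s = x·α(y) + y·α(x)`, the two equations say `s ≤ z` and `α(s)·z = z`. Then (Ł) at
`α(z), α(s)` gives `α(α(z)·s)·s = α(z)·z = 0`, whence `s ≤ α(z)·s`; and `α(z) ≤ α(s)` gives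
`α(z)·s ≤ α(s)·s = 0`. So `s = 0`, i.e. `x·α(y) = y·α(x) = 0`, and (Ł) turns `u·α(v) = 0` into
`u ≤ v`.
-/

/-- A near semiring: ⟨R, +, ·, 0, 1⟩ with ⟨R, +, 0⟩ a commutative monoid,
⟨R, ·, 1⟩ a unital groupoid, right distributivity, and 0 annihilating. -/
structure NearSemiring (R : Type*) where
  add : R → R → R
  mul : R → R → R
  zero : R
  one : R
  add_assoc : ∀ x y z : R, add (add x y) z = add x (add y z)
  add_comm : ∀ x y : R, add x y = add y x
  add_zero : ∀ x : R, add x zero = x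
  mul_one : ∀ x : R, mul x one = x
  one_mul : ∀ x : R, mul one x = x
  right_distrib : ∀ x y z : R, mul (add x y) z = add (mul x z) (mul y z)
  mul_zero : ∀ x : R, mul x zero = zero
  zero_mul : ∀ x : R, mul zero x = zero

/-- The induced relation: x ≤ y iff x + y = y. -/
def NearSemiring.le {R : Type*} (S : NearSemiring R) (x y : R) : Prop :=
  S.add x y = y

/-- An involutive near semiring: an idempotent near semiring with an
antitone involution α (antitone w.r.t. the order x ≤ y iff x + y = y). -/
structure InvNearSemiring (R : Type*) extends NearSemiring R where
  add_idem : ∀ x : R, add x x = x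
  alpha : R → R
  alpha_alpha : ∀ x : R, alpha (alpha x) = x
  alpha_antitone : ∀ x y : R, add x y = y → add (alpha y) (alpha x) = alpha x

/-- A Łukasiewicz near semiring: an involutive near semiring satisfying (Ł). -/
structure LukNearSemiring (R : Type*) extends InvNearSemiring R where
  luk : ∀ x y : R,
    mul (alpha (mul x (alpha y))) (alpha y) = mul (alpha (mul y (alpha x))) (alpha x)

namespace NearSemiring

variable {R : Type*} (S : NearSemiring R)

lemma zero_add (x : R) : S.add S.zero x = x := by
  rw [S.add_comm, S.add_zero]

lemma zero_le (x : R) : S.le S.zero x :=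
  S.zero_add x

lemma eq_zero_of_le_zero {x : R} (h : S.le x S.zero) : x = S.zero := by
  rwa [NearSemiring.le, S.add_zero] at h

lemma le_antisymm {x y : R} (hxy : S.le x y) (hyx : S.le y x) : x = y := by
  rw [← hyx, S.add_comm]
  exact hxy

lemma mul_le_mul_right {u v : R} (h : S.le u v) (w : R) : S.le (S.mul u w) (S.mul v w) := by
  rw [NearSemiring.le, ← S.right_distrib, h]

end NearSemiring

namespace InvNearSemiring

variable {R : Type*} (S : InvNearSemiring R)

lemma alpha_le_alpha {x y : R} (h : S.le x y) : S.le (S.alpha y) (S.alpha x) :=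
  S.alpha_antitone x y h

lemma le_of_alpha_le_alpha {x y : R} (h : S.le (S.alpha y) (S.alpha x)) : S.le x y := by
  simpa only [S.alpha_alpha] using S.alpha_le_alpha h

lemma le_alpha_zero (x : R) : S.le x (S.alpha S.zero) :=
  S.le_of_alpha_le_alpha (by simpa only [S.alpha_alpha] using S.zero_le (S.alpha x))

lemma eq_zero_of_add_eq_zero_left {p q : R} (h : S.add p q = S.zero) : p = S.zero := by
  have hp : S.add p (S.add p q) = S.add p q := by
    rw [← S.add_assoc, S.add_idem]
  rwa [h, S.add_zero] at hp

lemma eq_zero_of_add_eq_zero_right {p q : R} (h : S.add p q = S.zero) : q = S.zero :=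
  S.eq_zero_of_add_eq_zero_left ((S.add_comm q p).trans h)

end InvNearSemiring

namespace LukNearSemiring

variable {R : Type*} (S : LukNearSemiring R)

lemma alpha_zero_mul_alpha_one : S.mul (S.alpha S.zero) (S.alpha S.one) = S.zero := by
  simpa only [S.one_mul, S.alpha_alpha, S.zero_mul] using (S.luk S.one S.zero).symm

lemma mul_alpha_one (x : R) : S.mul x (S.alpha S.one) = S.zero :=
  S.eq_zero_of_le_zero <| S.alpha_zero_mul_alpha_one ▸
    S.mul_le_mul_right (S.le_alpha_zero x) (S.alpha S.one)

lemma mul_alpha_self (x : R) : S.mul x (S.alpha x) = S.zero := by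
  simpa only [S.one_mul, S.alpha_alpha, S.mul_alpha_one] using S.luk S.one x

lemma alpha_mul_self (x : R) : S.mul (S.alpha x) x = S.zero := by
  simpa only [S.alpha_alpha] using S.mul_alpha_self (S.alpha x)

lemma alpha_one : S.alpha S.one = S.zero := by
  simpa only [S.alpha_alpha, S.mul_one] using S.mul_alpha_self (S.alpha S.one)

lemma alpha_zero : S.alpha S.zero = S.one := by
  rw [← S.alpha_one, S.alpha_alpha]

lemma le_one (x : R) : S.le x S.one :=
  S.alpha_zero ▸ S.le_alpha_zero x

lemma mul_le (u w : R) : S.le (S.mul u w) w := by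
  have h := S.mul_le_mul_right (S.le_one u) w
  rwa [S.one_mul] at h

/-- By (Ł), `α v = α (v · α u) · α u`, which lies below `α u`. -/
lemma le_of_mul_alpha_eq_zero {u v : R} (h : S.mul u (S.alpha v) = S.zero) : S.le u v := by
  have hluk := S.luk u v
  rw [h, S.alpha_zero, S.one_mul] at hluk
  exact S.le_of_alpha_le_alpha (hluk ▸ S.mul_le _ (S.alpha u))

lemma eq_zero_of_le_of_alpha_mul_eq {s z : R} (hle : S.le s z)
    (hmul : S.mul (S.alpha s) z = z) : s = S.zero := by
  have hluk := S.luk (S.alpha z) (S.alpha s)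
  rw [S.alpha_alpha, S.alpha_alpha, hmul, S.alpha_mul_self] at hluk
  have hge : S.le s (S.mul (S.alpha z) s) :=
    S.le_of_alpha_le_alpha (S.le_of_mul_alpha_eq_zero (by rwa [S.alpha_alpha]))
  have hfix : S.mul (S.alpha z) s = s := S.le_antisymm (S.mul_le _ s) hge
  have hzero : S.le (S.mul (S.alpha z) s) S.zero := by
    simpa only [S.alpha_mul_self] using S.mul_le_mul_right (S.alpha_le_alpha hle) s
  exact hfix ▸ S.eq_zero_of_le_zero hzero

end LukNearSemiring

/-- Congruence regularity witness terms for Łukasiewicz near semirings: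
t₁(x,y,z) = ((x·α(y)) + (y·α(x))) + z and
t₂(x,y,z) = α((x·α(y)) + (y·α(x)))·z satisfy
t₁(x,y,z) = z ∧ t₂(x,y,z) = z iff x = y. -/
theorem lukNearSemiring_congruence_regular {R : Type*} (S : LukNearSemiring R)
    (x y z : R) :
    (S.add (S.add (S.mul x (S.alpha y)) (S.mul y (S.alpha x))) z = z ∧
     S.mul (S.alpha (S.add (S.mul x (S.alpha y)) (S.mul y (S.alpha x)))) z = z)
    ↔ x = y := by
  constructor
  · rintro ⟨hle, hmul⟩
    have hs := S.eq_zero_of_le_of_alpha_mul_eq hle hmul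
    exact S.le_antisymm
      (S.le_of_mul_alpha_eq_zero (S.eq_zero_of_add_eq_zero_left hs))
      (S.le_of_mul_alpha_eq_zero (S.eq_zero_of_add_eq_zero_right hs))
  · rintro rfl
    rw [S.mul_alpha_self, S.add_zero, S.alpha_zero, S.one_mul]
    exact ⟨S.zero_add z, rfl⟩
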